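/- Let k be an algebraically closed field of characteristic zero, n ≥ 2, A an n × n matrix over k, and A_H the (n−1) × (n−1) matrix obtained by deleting the last row and last column of A. The following are equivalent: (i) A and A_H have no common eigenvalue; (ii) A has no nonzero eigenvector v with v_n = 0, and Aᵀ has no nonzero eigenvector w with w_n = 0; (iii) the standard basis vector e_n is a cyclic vector both for A and for Aᵀ, i.e. {A^m e_n : m ≥ 0} spans kⁿ and {(Aᵀ)^m e_n : m ≥ 0} spans kⁿ. -/
import Mathlib

set_option maxHeartbeats 800000
set_option synthInstance.maxHeartbeats 200000

open Matrix

set_option linter.unusedSectionVars false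

section Aux

variable {k : Type*} [Field k] [IsAlgClosed k] {n : ℕ}

private lemma det_zero_of_eig {m : Type*} [Fintype m] [DecidableEq m]
    {A : Matrix m m k} {c : k}
    {v : m → k} (hv0 : v ≠ 0) (hev : A.mulVec v = c • v) :
    (A - c • 1).det = 0 := by
  rw [← Matrix.exists_mulVec_eq_zero_iff]
  exact ⟨v, hv0, by rw [sub_mulVec, smul_mulVec, one_mulVec, hev, sub_self]⟩

/-- If `A v = c v` with `v` nonzero and last coordinate zero, the corner matrix has
eigenvalue `c`. -/
private lemma corner_eig {A : Matrix (Fin (n + 1)) (Fin (n + 1)) k} {c : k}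
    {v : Fin (n + 1) → k} (hv0 : v ≠ 0) (hev : A.mulVec v = c • v)
    (hlast : v (Fin.last n) = 0) :
    (A.submatrix Fin.castSucc Fin.castSucc - c • (1 : Matrix (Fin n) (Fin n) k)).det = 0 := by
  apply det_zero_of_eig (v := fun i => v i.castSucc)
  · intro h
    apply hv0
    funext i
    refine Fin.lastCases hlast (fun j => ?_) i
    exact congrFun h j
  · funext i
    have h := congrFun hev i.castSucc
    simp only [mulVec, dotProduct, Pi.smul_apply, smul_eq_mul] at h ⊢
    rw [Fin.sum_univ_castSucc, hlast, mul_zero, add_zero] at h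
    simpa using h

private lemma det_transpose_sub {m : Type*} [Fintype m] [DecidableEq m] {A : Matrix m m k} {c : k} :
    (Aᵀ - c • 1).det = (A - c • 1).det := by
  rw [show Aᵀ - c • 1 = (A - c • 1)ᵀ by rw [transpose_sub, transpose_smul, transpose_one],
    det_transpose]

/-- Part 1 key equivalence, in existential form. -/
private lemma part1 (A : Matrix (Fin (n + 1)) (Fin (n + 1)) k) :
    (∃ c : k, (A - c • 1).det = 0 ∧
        (A.submatrix Fin.castSucc Fin.castSucc - c • (1 : Matrix (Fin n) (Fin n) k)).det = 0) ↔
      ((∃ (c : k) (v : Fin (n + 1) → k),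
          v ≠ 0 ∧ A.mulVec v = c • v ∧ v (Fin.last n) = 0) ∨
        (∃ (c : k) (w : Fin (n + 1) → k),
          w ≠ 0 ∧ Aᵀ.mulVec w = c • w ∧ w (Fin.last n) = 0)) := by
  constructor
  · rintro ⟨c, hdA, hdH⟩
    obtain ⟨v, hv0, hv⟩ := Matrix.exists_mulVec_eq_zero_iff.mpr hdA
    have hvA : A.mulVec v = c • v := by
      rw [sub_mulVec, smul_mulVec, one_mulVec, sub_eq_zero] at hv; exact hv
    obtain ⟨w, hw0, hw⟩ := Matrix.exists_mulVec_eq_zero_iff.mpr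
      (det_transpose_sub.trans hdA : (Aᵀ - c • 1).det = 0)
    have hwA : Aᵀ.mulVec w = c • w := by
      rw [sub_mulVec, smul_mulVec, one_mulVec, sub_eq_zero] at hw; exact hw
    by_cases hvl : v (Fin.last n) = 0
    · exact Or.inl ⟨c, v, hv0, hvA, hvl⟩
    by_cases hwl : w (Fin.last n) = 0
    · exact Or.inr ⟨c, w, hw0, hwA, hwl⟩
    -- neither eigenvector has zero last coordinate; use the corner eigenvector
    obtain ⟨u, hu0, hu⟩ := Matrix.exists_mulVec_eq_zero_iff.mpr hdH
    have huA : (A.submatrix Fin.castSucc Fin.castSucc).mulVec u = c • u := by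
      rw [sub_mulVec, smul_mulVec, one_mulVec, sub_eq_zero] at hu; exact hu
    set u' : Fin (n + 1) → k := Fin.snoc u 0 with hu'def
    have hu'cs : ∀ i : Fin n, A.mulVec u' i.castSucc = c * u' i.castSucc := by
      intro i
      have h := congrFun huA i
      simp only [mulVec, dotProduct, Pi.smul_apply, smul_eq_mul, submatrix_apply] at h ⊢
      rw [Fin.sum_univ_castSucc]
      simp only [hu'def, Fin.snoc_castSucc, Fin.snoc_last, mul_zero, add_zero]
      rw [h]
    have hkey : w ⬝ᵥ (A.mulVec u' - c • u') = 0 := by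
      have h1 : w ⬝ᵥ A.mulVec u' = c * (w ⬝ᵥ u') := by
        rw [Matrix.dotProduct_mulVec, ← Matrix.mulVec_transpose, hwA]
        simp [smul_dotProduct]
      have h2 : w ⬝ᵥ (c • u') = c * (w ⬝ᵥ u') := by
        simp [dotProduct_smul]
      rw [dotProduct_sub, h1, h2, sub_self]
    have hexp : w ⬝ᵥ (A.mulVec u' - c • u')
        = w (Fin.last n) * A.mulVec u' (Fin.last n) := by
      simp only [dotProduct, Pi.sub_apply, Pi.smul_apply, smul_eq_mul]
      rw [Fin.sum_univ_castSucc]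
      have : ∀ i : Fin n,
          w i.castSucc * (A.mulVec u' i.castSucc - c * u' i.castSucc) = 0 := by
        intro i; rw [hu'cs i, sub_self, mul_zero]
      rw [Finset.sum_congr rfl (fun i _ => this i), Finset.sum_const_zero, zero_add]
      simp [hu'def, Fin.snoc_last]
    have ht : A.mulVec u' (Fin.last n) = 0 := by
      rcases mul_eq_zero.mp (hexp ▸ hkey) with h | h
      · exact absurd h hwl
      · exact h
    refine Or.inl ⟨c, u', ?_, ?_, by simp [hu'def, Fin.snoc_last]⟩
    · intro h
      apply hu0
      funext i
      have := congrFun h i.castSucc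
      simpa [hu'def, Fin.snoc_castSucc] using this
    · funext i
      refine Fin.lastCases ?_ (fun j => ?_) i
      · rw [ht]; simp [hu'def, Fin.snoc_last]
      · rw [hu'cs j]; simp
  · rintro (⟨c, v, hv0, hev, hlast⟩ | ⟨c, w, hw0, hew, hlast⟩)
    · exact ⟨c, det_zero_of_eig hv0 hev, corner_eig hv0 hev hlast⟩
    · refine ⟨c, ?_, ?_⟩
      · rw [← det_transpose_sub]; exact det_zero_of_eig hw0 hew
      have := corner_eig hw0 hew hlast
      rwa [← transpose_submatrix, det_transpose_sub] at this

/-- `e_n` is cyclic for `B` iff `Bᵀ` has no nonzero eigenvector with vanishing last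
coordinate. -/
private lemma cyclic_iff (B : Matrix (Fin (n + 1)) (Fin (n + 1)) k) :
    (¬ ∃ (c : k) (w : Fin (n + 1) → k),
        w ≠ 0 ∧ Bᵀ.mulVec w = c • w ∧ w (Fin.last n) = 0) ↔
      Submodule.span k
        (Set.range fun m : ℕ => (B ^ m).mulVec (Pi.single (Fin.last n) 1)) = ⊤ := by
  set g : ℕ → (Fin (n + 1) → k) :=
    fun m : ℕ => (B ^ m).mulVec (Pi.single (Fin.last n) 1) with hg
  set W : Submodule k (Fin (n + 1) → k) := Submodule.span k (Set.range g) with hW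
  constructor
  · intro h
    by_contra hne
    apply h
    -- W is B-invariant
    have himg : B.mulVecLin '' Set.range g ⊆ Set.range g := by
      rintro _ ⟨_, ⟨m, rfl⟩, rfl⟩
      refine ⟨m + 1, ?_⟩
      simp only [hg, Matrix.mulVecLin_apply, Matrix.mulVec_mulVec]
      rw [← pow_succ']
    have hmap : W.map B.mulVecLin ≤ W := by
      rw [hW, Submodule.map_span]
      exact Submodule.span_mono himg |>.trans (le_of_eq rfl)
    have hinv : ∀ x ∈ W, B.mulVecLin x ∈ W := fun x hx =>
      hmap (Submodule.mem_map.mpr ⟨x, hx, rfl⟩)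
    -- the dual annihilator is nonzero and invariant under the dual map
    set U : Submodule k (Module.Dual k (Fin (n + 1) → k)) := W.dualAnnihilator with hU
    have hUne : U ≠ ⊥ := by
      intro h0
      exact hne (Subspace.dualAnnihilator_inj.mp
        (h0.trans Submodule.dualAnnihilator_top.symm))
    haveI : Nontrivial U := Submodule.nontrivial_iff_ne_bot.mpr hUne
    have hdinv : ∀ φ ∈ U, B.mulVecLin.dualMap φ ∈ U := by
      intro φ hφ
      rw [hU, Submodule.mem_dualAnnihilator] at hφ ⊢
      intro x hx
      exact hφ _ (hinv x hx)
    obtain ⟨c, hc⟩ := Module.End.exists_eigenvalue (K := k) (V := U)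
      (LinearMap.restrict B.mulVecLin.dualMap (p := U) (q := U) hdinv)
    obtain ⟨⟨φ, hφU⟩, hφv⟩ := hc.exists_hasEigenvector
    have hφ0 : φ ≠ 0 := by
      intro h0
      exact hφv.2 (by simp [h0, Submodule.mk_eq_zero])
    have heig : ∀ x, φ (B.mulVec x) = c * φ x := by
      intro x
      have := congrArg Subtype.val hφv.apply_eq_smul
      have h2 := congrFun (congrArg DFunLike.coe this) x
      simpa [LinearMap.restrict_apply, Matrix.mulVecLin_apply] using h2
    refine ⟨c, fun i => φ (Pi.single i 1), ?_, ?_, ?_⟩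
    · intro h0
      apply hφ0
      refine LinearMap.ext fun x => ?_
      show φ x = (0 : Module.Dual k (Fin (n + 1) → k)) x
      rw [LinearMap.zero_apply]
      rw [LinearMap.pi_apply_eq_sum_univ φ x]
      have hsingle : ∀ i : Fin (n + 1),
          (fun j => if i = j then (1 : k) else 0) = Pi.single i 1 := by
        intro i; funext j; simp [Pi.single_apply, eq_comm]
      simp only [hsingle]
      have : ∀ i : Fin (n + 1), φ (Pi.single i 1) = 0 := fun i => congrFun h0 i
      simp [this]
    · funext i
      have h1 : B.mulVec (Pi.single i 1) = fun j => B j i * 1 := Matrix.mulVec_single _ _ _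
      have h2 := heig (Pi.single i 1)
      rw [h1, LinearMap.pi_apply_eq_sum_univ φ] at h2
      have hsingle : ∀ i : Fin (n + 1),
          (fun j => if i = j then (1 : k) else 0) = Pi.single i 1 := by
        intro i; funext j; simp [Pi.single_apply, eq_comm]
      simp only [hsingle] at h2
      simp only [Matrix.mulVec, dotProduct, transpose_apply, Pi.smul_apply,
        smul_eq_mul]
      rw [← h2]
      simp [mul_comm]
    · have hmem : Pi.single (Fin.last n) 1 ∈ W := by
        apply Submodule.subset_span
        refine ⟨0, ?_⟩
        show B ^ 0 *ᵥ Pi.single (Fin.last n) 1 = _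
        rw [pow_zero, Matrix.one_mulVec]
      have := (Submodule.mem_dualAnnihilator _).mp hφU
      exact this _ hmem
  · rintro htop ⟨c, w, hw0, hew, hlast⟩
    have hvan : ∀ x ∈ W, w ⬝ᵥ x = 0 := by
      intro x hx
      induction hx using Submodule.span_induction with
      | mem x hx =>
        obtain ⟨m, rfl⟩ := hx
        have hpow : (Bᵀ) ^ m *ᵥ w = c ^ m • w := by
          induction m with
          | zero => simp [Matrix.one_mulVec]
          | succ m ih =>
            rw [pow_succ', ← Matrix.mulVec_mulVec, ih, Matrix.mulVec_smul, hew,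
              smul_smul, ← pow_succ]
        rw [hg, Matrix.dotProduct_mulVec, ← Matrix.mulVec_transpose, Matrix.transpose_pow,
          hpow]
        simp [smul_dotProduct, dotProduct_single, hlast]
      | zero => simp
      | add x y _ _ hx hy => rw [dotProduct_add, hx, hy, add_zero]
      | smul a x _ hx => rw [dotProduct_smul, hx, smul_zero]
    obtain ⟨i, hi⟩ := Function.ne_iff.mp hw0
    have := hvan (Pi.single i 1) (htop ▸ Submodule.mem_top)
    rw [dotProduct_single, mul_one] at this
    exact hi this

end Aux

/-- Stability for the general-linear/unitary Gan–Gross–Prasad pair: `A` and its upper-left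
`n × n` corner `A_H` share no eigenvalue iff neither `A` nor `Aᵀ` has a nonzero eigenvector
with vanishing last coordinate, iff the last standard basis vector is cyclic for both `A`
and `Aᵀ`. -/
theorem statement13 (k : Type*) [Field k] [IsAlgClosed k] [CharZero k]
    (n : ℕ) (hn : 1 ≤ n) (A : Matrix (Fin (n + 1)) (Fin (n + 1)) k) :
    ((¬ ∃ c : k, (A - c • 1).det = 0 ∧
        (A.submatrix Fin.castSucc Fin.castSucc - c • (1 : Matrix (Fin n) (Fin n) k)).det = 0) ↔
      ((¬ ∃ (c : k) (v : Fin (n + 1) → k),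
          v ≠ 0 ∧ A.mulVec v = c • v ∧ v (Fin.last n) = 0) ∧
        (¬ ∃ (c : k) (w : Fin (n + 1) → k),
          w ≠ 0 ∧ Aᵀ.mulVec w = c • w ∧ w (Fin.last n) = 0))) ∧
    (((¬ ∃ (c : k) (v : Fin (n + 1) → k),
          v ≠ 0 ∧ A.mulVec v = c • v ∧ v (Fin.last n) = 0) ∧
        (¬ ∃ (c : k) (w : Fin (n + 1) → k),
          w ≠ 0 ∧ Aᵀ.mulVec w = c • w ∧ w (Fin.last n) = 0)) ↔
      (Submodule.span k
          (Set.range fun m : ℕ => (A ^ m).mulVec (Pi.single (Fin.last n) 1)) = ⊤ ∧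
        Submodule.span k
          (Set.range fun m : ℕ => (Aᵀ ^ m).mulVec (Pi.single (Fin.last n) 1)) = ⊤)) := by
  constructor
  · rw [← not_or]
    exact not_congr (part1 A)
  · have h1 := cyclic_iff A
    have h2 := cyclic_iff Aᵀ
    rw [transpose_transpose] at h2
    exact ⟨fun ⟨a, b⟩ => ⟨h1.mp b, h2.mp a⟩, fun ⟨a, b⟩ => ⟨h2.mpr b, h1.mpr a⟩⟩
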